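/- The higher-dimensional guiding vector field constructed from a parameterized path is singularity-free: for every ξ ∈ ℝ^{n+1}, χʰ(ξ) ≠ 0; indeed ‖χʰ(ξ)‖ ≥ 1 for all ξ ∈ ℝ^{n+1}, so the singular set {ξ ∈ ℝ^{n+1} : χʰ(ξ) = 0} is empty. -/

import Mathlib

/-- The higher-dimensional guiding vector field `χʰ` on `ℝ^{n+1}` (coordinates
`ξ = (x₁, …, xₙ, w)`) associated with the parameterized path `xᵢ = fᵢ(w)` and gains
`kᵢ`:  `χʰᵢ(ξ) = (−1)ⁿ fᵢ'(w) − kᵢ φᵢ(ξ)` for `i = 1, …, n`, and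
`χʰ_{n+1}(ξ) = (−1)ⁿ + ∑ᵢ kᵢ φᵢ(ξ) fᵢ'(w)`, where `φᵢ(ξ) = xᵢ − fᵢ(w)`. -/
noncomputable def chih {n : ℕ} (f : Fin n → ℝ → ℝ) (kg : Fin n → ℝ)
    (ξ : EuclideanSpace ℝ (Fin (n + 1))) : EuclideanSpace ℝ (Fin (n + 1)) :=
  WithLp.toLp 2 (Fin.snoc (α := fun _ => ℝ)
    (fun i => (-1 : ℝ) ^ n * deriv (f i) (ξ (Fin.last n)) -
      kg i * (ξ (Fin.castSucc i) - f i (ξ (Fin.last n))))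
    ((-1 : ℝ) ^ n + ∑ i, kg i * (ξ (Fin.castSucc i) - f i (ξ (Fin.last n))) *
      deriv (f i) (ξ (Fin.last n))))

/-- The higher-dimensional guiding vector field constructed from a parameterized
path is singularity-free: `‖χʰ(ξ)‖ ≥ 1` for all `ξ`, hence `χʰ(ξ) ≠ 0` everywhere
and the singular set is empty. -/
theorem chih_singularity_free {n : ℕ} (hn : 1 ≤ n)
    (f : Fin n → ℝ → ℝ) (hf : ∀ i, ContDiff ℝ 2 (f i))
    (kg : Fin n → ℝ) (hk : ∀ i, 0 < kg i) :
    (∀ ξ : EuclideanSpace ℝ (Fin (n + 1)), 1 ≤ ‖chih f kg ξ‖) ∧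
      (∀ ξ : EuclideanSpace ℝ (Fin (n + 1)), chih f kg ξ ≠ 0) ∧
      {ξ : EuclideanSpace ℝ (Fin (n + 1)) | chih f kg ξ = 0} = ∅ := by
  have key : ∀ ξ : EuclideanSpace ℝ (Fin (n + 1)), 1 ≤ ‖chih f kg ξ‖ := by
    intro ξ
    set w : ℝ := ξ (Fin.last n) with hw
    set d : Fin n → ℝ := fun i => deriv (f i) w with hd
    set u : EuclideanSpace ℝ (Fin (n + 1)) :=
      WithLp.toLp 2 (Fin.snoc (α := fun _ => ℝ) d 1 : Fin (n + 1) → ℝ) with hu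
    set S : ℝ := ∑ i, d i ^ 2 with hS
    have hS0 : 0 ≤ S := Finset.sum_nonneg fun i _ => sq_nonneg _
    -- inner products, written as sums
    have hinner : ∀ x y : EuclideanSpace ℝ (Fin (n + 1)),
        (inner ℝ x y : ℝ) = ∑ i, x i * y i := by
      intro x y
      simp [PiLp.inner_apply, RCLike.inner_apply, mul_comm]
    have huu : (inner ℝ u u : ℝ) = S + 1 := by
      rw [hinner, Fin.sum_univ_castSucc]
      simp [hu, hS, sq]
    have hcu : (inner ℝ (chih f kg ξ) u : ℝ) = (-1 : ℝ) ^ n * (S + 1) := by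
      rw [hinner, Fin.sum_univ_castSucc]
      have h1 : ∀ i : Fin n, chih f kg ξ (Fin.castSucc i) * u (Fin.castSucc i)
          = (-1 : ℝ) ^ n * d i ^ 2 - kg i * (ξ (Fin.castSucc i) - f i w) * d i := by
        intro i
        simp [chih, hu, hd, hw]
        ring
      have h2 : chih f kg ξ (Fin.last n) * u (Fin.last n)
          = (-1 : ℝ) ^ n + ∑ i, kg i * (ξ (Fin.castSucc i) - f i w) * d i := by
        simp [chih, hu, hd, hw]
      rw [Finset.sum_congr rfl fun i _ => h1 i, h2, Finset.sum_sub_distrib,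
        ← Finset.mul_sum, ← hS]
      ring
    have hnu : ‖u‖ ^ 2 = S + 1 := by
      rw [← real_inner_self_eq_norm_sq, huu]
    have hcs : |(inner ℝ (chih f kg ξ) u : ℝ)| ≤ ‖chih f kg ξ‖ * ‖u‖ :=
      abs_real_inner_le_norm _ _
    have habs : |(inner ℝ (chih f kg ξ) u : ℝ)| = S + 1 := by
      rw [hcu, abs_mul, abs_pow, abs_neg, abs_one, one_pow, one_mul,
        abs_of_nonneg (by linarith)]
    have hun : 0 ≤ ‖u‖ := norm_nonneg _
    have hcn : 0 ≤ ‖chih f kg ξ‖ := norm_nonneg _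
    nlinarith [hcs, habs, hnu, hS0, sq_nonneg (‖chih f kg ξ‖ - ‖u‖)]
  refine ⟨key, fun ξ h => ?_, ?_⟩
  · have := key ξ
    rw [h, norm_zero] at this
    linarith
  · ext ξ
    simp only [Set.mem_setOf_eq, Set.mem_empty_iff_false, iff_false]
    intro h
    have := key ξ
    rw [h, norm_zero] at this
    linarith
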